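/- arXiv:2503.17337 — 3 statements merged into one kernel-verified Lean document; each statement's English description precedes it below -/
import Mathlib

section
/- Let (X,d) be a length space and U ⊆ X an open, relatively compact subset. Then the length space (Ū, d_Ū), where d_Ū is the intrinsic metric induced on the closure Ū (infimum of lengths of paths in Ū), is a complete metric space. -/
open Set

/-- The set of lengths of continuous paths from `x` to `y` whose image lies in `s`. -/
noncomputable def pathLengths {X : Type*} [MetricSpace X] (s : Set X) (x y : X) :
    Set ENNReal :=
  {L | ∃ γ : ℝ → X, ContinuousOn γ (Icc 0 1) ∧ γ 0 = x ∧ γ 1 = y ∧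
        γ '' Icc 0 1 ⊆ s ∧ L = eVariationOn γ (Icc 0 1)}

open Filter

set_option linter.unusedSectionVars false
set_option linter.unusedVariables false


namespace ClosureIntrinsicAux

noncomputable section

/-- breakpoints `a k = 1 - (1/2)^k`. -/
def aSeq (k : ℕ) : ℝ := 1 - (1/2)^k

lemma aSeq_zero : aSeq 0 = 0 := by simp [aSeq]

lemma aSeq_lt_one (k : ℕ) : aSeq k < 1 := by
  have : (0:ℝ) < (1/2)^k := by positivity
  simp only [aSeq]; linarith

lemma aSeq_strictMono : StrictMono aSeq := by
  apply strictMono_nat_of_lt_succ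
  intro k
  have : ((1:ℝ)/2)^(k+1) < (1/2)^k := by
    apply pow_lt_pow_right_of_lt_one₀ <;> norm_num
  simp only [aSeq]; linarith

lemma aSeq_mono : Monotone aSeq := aSeq_strictMono.monotone

lemma aSeq_nonneg (k : ℕ) : 0 ≤ aSeq k := by
  rw [← aSeq_zero]; exact aSeq_mono (Nat.zero_le k)

lemma aSeq_succ_sub (k : ℕ) : aSeq (k+1) - aSeq k = (1/2)^(k+1) := by
  simp only [aSeq, pow_succ]; ring

open scoped Classical in
/-- index of the piece containing `t`. -/
def Kf (t : ℝ) : ℕ := if h : ∃ k, t < aSeq (k+1) then Nat.find h else 0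

lemma Kf_exists {t : ℝ} (ht : t < 1) : ∃ k, t < aSeq (k+1) := by
  obtain ⟨n, hn⟩ := exists_pow_lt_of_lt_one (x := 1 - t) (y := (1:ℝ)/2) (by linarith) (by norm_num)
  refine ⟨n, ?_⟩
  have h2 : ((1:ℝ)/2)^(n+1) ≤ (1/2)^n := by
    apply pow_le_pow_of_le_one <;> norm_num
  simp only [aSeq]; linarith

lemma Kf_lt {t : ℝ} (ht : t < 1) : t < aSeq (Kf t + 1) := by
  classical
  rw [Kf, dif_pos (Kf_exists ht)]
  exact Nat.find_spec (Kf_exists ht)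

lemma Kf_le {t : ℝ} (h0 : 0 ≤ t) (ht : t < 1) : aSeq (Kf t) ≤ t := by
  classical
  rw [Kf, dif_pos (Kf_exists ht)]
  cases h : Nat.find (Kf_exists ht) with
  | zero => simpa [aSeq_zero] using h0
  | succ m =>
    have hm := Nat.find_min (Kf_exists ht) (m := m) (by omega)
    push_neg at hm
    exact hm

lemma Kf_eq {t : ℝ} {k : ℕ} (h1 : aSeq k ≤ t) (h2 : t < aSeq (k+1)) : Kf t = k := by
  classical
  have ht : t < 1 := h2.trans_le (aSeq_lt_one _).le
  rw [Kf, dif_pos (Kf_exists ht)]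
  rw [Nat.find_eq_iff]
  refine ⟨h2, fun j hj hlt => ?_⟩
  have : aSeq (j+1) ≤ aSeq k := aSeq_mono (by omega)
  linarith

lemma Kf_ge {t : ℝ} {K : ℕ} (h1 : aSeq K < t) (ht : t < 1) : K ≤ Kf t := by
  have := Kf_lt ht
  by_contra h
  push_neg at h
  have : aSeq (Kf t + 1) ≤ aSeq K := aSeq_mono (by omega)
  linarith

/-- affine reparametrization of piece `k` onto `[0,1]`. -/
def psi (k : ℕ) (t : ℝ) : ℝ := (t - aSeq k) * 2^(k+1)

lemma psi_monotone (k : ℕ) : Monotone (psi k) := by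
  intro s t hst
  have : (0:ℝ) ≤ 2^(k+1) := by positivity
  exact mul_le_mul_of_nonneg_right (by linarith) this

lemma psi_left (k : ℕ) : psi k (aSeq k) = 0 := by simp [psi]

lemma psi_right (k : ℕ) : psi k (aSeq (k+1)) = 1 := by
  simp only [psi, aSeq_succ_sub]
  rw [← mul_pow]; norm_num

lemma psi_mem {k : ℕ} {t : ℝ} (h1 : aSeq k ≤ t) (h2 : t ≤ aSeq (k+1)) :
    psi k t ∈ Icc (0:ℝ) 1 := by
  constructor
  · rw [← psi_left k]; exact psi_monotone k h1
  · rw [← psi_right k]; exact psi_monotone k h2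

lemma psi_image (k : ℕ) : psi k '' Icc (aSeq k) (aSeq (k+1)) = Icc 0 1 := by
  have hcomp : psi k = (fun x => x * 2^(k+1)) ∘ (fun x => x - aSeq k) := rfl
  rw [hcomp, image_comp, image_sub_const_Icc,
    image_mul_right_Icc (by linarith [aSeq_succ_sub k, pow_pos (one_half_pos (α := ℝ)) (k+1)])
      (by positivity)]
  rw [sub_self, aSeq_succ_sub, zero_mul, ← mul_pow]
  norm_num

lemma psi_continuous (k : ℕ) : Continuous (psi k) := by
  unfold psi; fun_prop

variable {X : Type*} [MetricSpace X]

/-- The concatenated path. -/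
def Gamma (γ : ℕ → ℝ → X) (x : X) (t : ℝ) : X :=
  if t < 1 then γ (Kf t) (psi (Kf t) t) else x

lemma Gamma_one (γ : ℕ → ℝ → X) (x : X) : Gamma γ x 1 = x := by
  simp [Gamma]

lemma Gamma_at_a (γ : ℕ → ℝ → X) (x : X) (K : ℕ) : Gamma γ x (aSeq K) = γ K 0 := by
  rw [Gamma, if_pos (aSeq_lt_one K),
    Kf_eq le_rfl (aSeq_strictMono (Nat.lt_succ_self K)), psi_left]

lemma Gamma_eqOn (γ : ℕ → ℝ → X) (x : X) (hend : ∀ k, γ k 1 = γ (k+1) 0) (k : ℕ) :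
    EqOn (Gamma γ x) (γ k ∘ psi k) (Icc (aSeq k) (aSeq (k+1))) := by
  rintro t ⟨h1, h2⟩
  rcases lt_or_eq_of_le h2 with h2' | h2'
  · have ht : t < 1 := h2'.trans (aSeq_lt_one _)
    rw [Gamma, if_pos ht, Kf_eq h1 h2']
    rfl
  · subst h2'
    rw [Gamma, if_pos (aSeq_lt_one _),
      Kf_eq (k := k+1) le_rfl (aSeq_strictMono (Nat.lt_succ_self (k+1))), psi_left]
    simp only [Function.comp_apply, psi_right]
    exact (hend k).symm

lemma Gamma_mem {γ : ℕ → ℝ → X} {x : X} {t : ℝ} (h0 : 0 ≤ t) (h1 : t < 1) :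
    Gamma γ x t = γ (Kf t) (psi (Kf t) t) ∧ psi (Kf t) t ∈ Icc (0:ℝ) 1 := by
  refine ⟨by rw [Gamma, if_pos h1], psi_mem (Kf_le h0 h1) (Kf_lt h1).le⟩

end

end ClosureIntrinsicAux
namespace ClosureIntrinsicAux

section

variable {X : Type*} [MetricSpace X]

lemma contOn_union {f : ℝ → X} {s t : Set ℝ} (hs : IsClosed s) (ht : IsClosed t)
    (h1 : ContinuousOn f s) (h2 : ContinuousOn f t) : ContinuousOn f (s ∪ t) := by
  intro z hz
  have hcs : ContinuousWithinAt f s z := by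
    by_cases h : z ∈ s
    · exact h1 z h
    · exact continuousWithinAt_of_notMem_closure (by rwa [hs.closure_eq])
  have hct : ContinuousWithinAt f t z := by
    by_cases h : z ∈ t
    · exact h2 z h
    · exact continuousWithinAt_of_notMem_closure (by rwa [ht.closure_eq])
  exact hcs.union hct

lemma evar_le {f : ℝ → X} {s : Set ℝ} {C : ENNReal}
    (h : ∀ (n : ℕ) (u : ℕ → ℝ), Monotone u → (∀ i, u i ∈ s) →
      ∑ i ∈ Finset.range n, edist (f (u (i + 1))) (f (u i)) ≤ C) :
    eVariationOn f s ≤ C :=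
  iSup_le fun p => h p.1 p.2.1 p.2.2.1 p.2.2.2

variable (γ : ℕ → ℝ → X) (x : X)

lemma Gamma_contOn_seg (hcont : ∀ k, ContinuousOn (γ k) (Icc 0 1))
    (hend : ∀ k, γ k 1 = γ (k+1) 0) (k : ℕ) :
    ContinuousOn (Gamma γ x) (Icc (aSeq k) (aSeq (k+1))) := by
  refine ContinuousOn.congr ?_ (Gamma_eqOn γ x hend k)
  exact (hcont k).comp (psi_continuous k).continuousOn
    (fun t htt => psi_mem htt.1 htt.2)

lemma Gamma_contOn_prefix (hcont : ∀ k, ContinuousOn (γ k) (Icc 0 1))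
    (hend : ∀ k, γ k 1 = γ (k+1) 0) (K : ℕ) :
    ContinuousOn (Gamma γ x) (Icc 0 (aSeq K)) := by
  induction K with
  | zero => rw [aSeq_zero, Icc_self]; exact continuousOn_singleton _ _
  | succ K ih =>
    have : Icc (0:ℝ) (aSeq (K+1)) = Icc 0 (aSeq K) ∪ Icc (aSeq K) (aSeq (K+1)) :=
      (Icc_union_Icc_eq_Icc (aSeq_nonneg K)
        (aSeq_mono (Nat.le_succ K))).symm
    rw [this]
    exact contOn_union isClosed_Icc isClosed_Icc ih (Gamma_contOn_seg γ x hcont hend K)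

lemma Gamma_var_seg (hend : ∀ k, γ k 1 = γ (k+1) 0) (k : ℕ) :
    eVariationOn (Gamma γ x) (Icc (aSeq k) (aSeq (k+1))) = eVariationOn (γ k) (Icc 0 1) := by
  rw [eVariationOn.eq_of_eqOn (Gamma_eqOn γ x hend k),
    eVariationOn.comp_eq_of_monotoneOn (γ k) (psi k) ((psi_monotone k).monotoneOn _),
    psi_image]

lemma Gamma_var_prefix (hend : ∀ k, γ k 1 = γ (k+1) 0) (K : ℕ) :
    eVariationOn (Gamma γ x) (Icc 0 (aSeq K)) ≤
      ∑ k ∈ Finset.range K, eVariationOn (γ k) (Icc 0 1) := by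
  induction K with
  | zero =>
    rw [aSeq_zero, Icc_self]
    simp [eVariationOn.subsingleton (Gamma γ x) (Set.subsingleton_singleton)]
  | succ K ih =>
    have key := eVariationOn.Icc_add_Icc (Gamma γ x) (s := univ)
      (aSeq_nonneg K) (aSeq_mono (Nat.le_succ K)) (mem_univ _)
    simp only [univ_inter] at key
    rw [← key, Finset.sum_range_succ]
    exact add_le_add ih (Gamma_var_seg γ x hend K).le

lemma edist_start_to_x (hend : ∀ k, γ k 1 = γ (k+1) 0)
    (hv : Tendsto (fun k => γ k 0) atTop (nhds x)) (K : ℕ) :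
    edist (γ K 0) x ≤ ∑' j, eVariationOn (γ (K + j)) (Icc 0 1) := by
  have step : ∀ p, edist (γ K 0) (γ (K + p) 0) ≤
      ∑ j ∈ Finset.range p, eVariationOn (γ (K + j)) (Icc 0 1) := by
    intro p
    induction p with
    | zero => simp
    | succ p ih =>
      calc edist (γ K 0) (γ (K + (p+1)) 0)
          ≤ edist (γ K 0) (γ (K + p) 0) + edist (γ (K + p) 0) (γ (K + p + 1) 0) := by
            rw [show K + (p+1) = K + p + 1 from rfl]; exact edist_triangle _ _ _
        _ ≤ (∑ j ∈ Finset.range p, eVariationOn (γ (K + j)) (Icc 0 1))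
            + eVariationOn (γ (K + p)) (Icc 0 1) := by
            refine add_le_add ih ?_
            rw [← hend (K + p)]
            exact eVariationOn.edist_le (γ (K+p))
              (Set.mem_Icc.mpr ⟨le_rfl, zero_le_one⟩) (Set.mem_Icc.mpr ⟨zero_le_one, le_rfl⟩)
        _ = ∑ j ∈ Finset.range (p+1), eVariationOn (γ (K + j)) (Icc 0 1) := by
            rw [Finset.sum_range_succ]
  have hlim : Tendsto (fun p => edist (γ K 0) (γ (K + p) 0)) atTop
      (nhds (edist (γ K 0) x)) := by
    refine Filter.Tendsto.edist tendsto_const_nhds ?_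
    exact hv.comp (by simpa [Function.comp, add_comm] using tendsto_add_atTop_nat K)
  exact le_of_tendsto hlim (Filter.Eventually.of_forall fun p =>
    (step p).trans (ENNReal.sum_le_tsum _))

end

end ClosureIntrinsicAux
namespace ClosureIntrinsicAux

section

variable {X : Type*} [MetricSpace X] (γ : ℕ → ℝ → X) (x : X)

lemma Gamma_contOn (hcont : ∀ k, ContinuousOn (γ k) (Icc 0 1))
    (hend : ∀ k, γ k 1 = γ (k+1) 0)
    (hv : Tendsto (fun k => γ k 0) atTop (nhds x))
    (hl : Tendsto (fun k => eVariationOn (γ k) (Icc (0:ℝ) 1)) atTop (nhds 0)) :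
    ContinuousOn (Gamma γ x) (Icc 0 1) := by
  intro t ht
  by_cases htl : t < 1
  · have hK := Kf_lt htl
    have h1 : ContinuousWithinAt (Gamma γ x) (Icc 0 (aSeq (Kf t + 1))) t :=
      Gamma_contOn_prefix γ x hcont hend (Kf t + 1) t ⟨ht.1, hK.le⟩
    refine h1.mono_of_mem_nhdsWithin ?_
    rw [mem_nhdsWithin]
    exact ⟨Iio (aSeq (Kf t + 1)), isOpen_Iio, hK, fun y hy => ⟨hy.2.1, hy.1.le⟩⟩
  · have ht1 : t = 1 := le_antisymm ht.2 (not_lt.mp htl)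
    subst ht1
    rw [ContinuousWithinAt, Gamma_one]
    rw [EMetric.tendsto_nhds]
    intro δ hδ
    have h2 : Tendsto (fun k => eVariationOn (γ k) (Icc (0:ℝ) 1) + edist (γ k 0) x)
        atTop (nhds 0) := by
      have he : Tendsto (fun k => edist (γ k 0) x) atTop (nhds 0) := by
        have := Filter.Tendsto.edist hv (tendsto_const_nhds (x := x))
        simpa [edist_self] using this
      simpa using hl.add he
    obtain ⟨K, hK⟩ := Filter.eventually_atTop.mp (h2.eventually_lt_const hδ)
    have hmem : Ioi (aSeq K) ∈ nhdsWithin 1 (Icc (0:ℝ) 1) :=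
      mem_nhdsWithin_of_mem_nhds (Ioi_mem_nhds (aSeq_lt_one K))
    filter_upwards [hmem, self_mem_nhdsWithin] with t ht1 ht2
    by_cases htl : t < 1
    · have h0 : (0:ℝ) ≤ t := ht2.1
      obtain ⟨hG, hpsi⟩ := Gamma_mem (γ := γ) (x := x) h0 htl
      have hk : K ≤ Kf t := Kf_ge ht1 htl
      calc edist (Gamma γ x t) x
          ≤ edist (Gamma γ x t) (γ (Kf t) 0) + edist (γ (Kf t) 0) x := edist_triangle _ _ _
        _ ≤ eVariationOn (γ (Kf t)) (Icc 0 1) + edist (γ (Kf t) 0) x := by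
            refine add_le_add ?_ le_rfl
            rw [hG]
            exact eVariationOn.edist_le _ hpsi ⟨le_rfl, zero_le_one⟩
        _ < δ := hK _ hk
    · have : t = 1 := le_antisymm ht2.2 (not_lt.mp htl)
      subst this; rw [Gamma_one]; simpa using hδ

lemma Gamma_var (hend : ∀ k, γ k 1 = γ (k+1) 0)
    (hv : Tendsto (fun k => γ k 0) atTop (nhds x)) :
    eVariationOn (Gamma γ x) (Icc 0 1) ≤ ∑' k, eVariationOn (γ k) (Icc (0:ℝ) 1) := by
  classical
  apply evar_le
  intro n u hu hus
  set K := (Finset.range (n+1)).sup (fun i => Kf (u i) + 1) with hKdef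
  set c := aSeq K with hc
  have hc1 : c < 1 := aSeq_lt_one K
  have hc0 : 0 ≤ c := aSeq_nonneg K
  have hub : ∀ i, i < n + 1 → u i < 1 → u i ≤ c := by
    intro i hi hlt
    refine (Kf_lt hlt).le.trans (aSeq_mono ?_)
    exact Finset.le_sup (f := fun i => Kf (u i) + 1) (Finset.mem_range.mpr hi)
  have key : ∀ i ∈ Finset.range n,
      edist (Gamma γ x (u (i+1))) (Gamma γ x (u i)) ≤
        edist (Gamma γ x (min (u (i+1)) c)) (Gamma γ x (min (u i) c)) +
          (if u i < 1 ∧ ¬ u (i+1) < 1 then edist (Gamma γ x c) x else 0) := by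
    intro i hi
    rw [Finset.mem_range] at hi
    by_cases h1 : u (i+1) < 1
    · have h0 : u i < 1 := lt_of_le_of_lt (hu (Nat.le_succ i)) h1
      rw [min_eq_left (hub (i+1) (by omega) h1), min_eq_left (hub i (by omega) h0),
        if_neg (by simp [h1]), add_zero]
    · have hu1 : u (i+1) = 1 := le_antisymm (hus (i+1)).2 (not_lt.mp h1)
      have hmin1 : min (u (i+1)) c = c := min_eq_right (by rw [hu1]; exact hc1.le)
      by_cases h0 : u i < 1
      · rw [if_pos ⟨h0, h1⟩, hmin1, min_eq_left (hub i (by omega) h0), hu1, Gamma_one]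
        calc edist x (Gamma γ x (u i))
            ≤ edist x (Gamma γ x c) + edist (Gamma γ x c) (Gamma γ x (u i)) :=
              edist_triangle _ _ _
          _ = edist (Gamma γ x c) (Gamma γ x (u i)) + edist (Gamma γ x c) x := by
              rw [edist_comm x, add_comm]
      · have hui : u i = 1 := le_antisymm (hus i).2 (not_lt.mp h0)
        rw [hu1, hui, edist_self]
        exact zero_le
  calc ∑ i ∈ Finset.range n, edist (Gamma γ x (u (i+1))) (Gamma γ x (u i))
      ≤ ∑ i ∈ Finset.range n,
          (edist (Gamma γ x (min (u (i+1)) c)) (Gamma γ x (min (u i) c)) +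
            (if u i < 1 ∧ ¬ u (i+1) < 1 then edist (Gamma γ x c) x else 0)) :=
        Finset.sum_le_sum key
    _ = (∑ i ∈ Finset.range n,
          edist (Gamma γ x (min (u (i+1)) c)) (Gamma γ x (min (u i) c))) +
        ∑ i ∈ Finset.range n,
          (if u i < 1 ∧ ¬ u (i+1) < 1 then edist (Gamma γ x c) x else 0) :=
        Finset.sum_add_distrib
    _ ≤ eVariationOn (Gamma γ x) (Icc 0 c) + edist (Gamma γ x c) x := by
        refine add_le_add ?_ ?_
        · exact eVariationOn.sum_le (hu.min monotone_const)
            (fun i => ⟨le_min (hus i).1 hc0, min_le_right _ _⟩)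
        · have heq : (∑ i ∈ Finset.range n,
              (if u i < 1 ∧ ¬ u (i+1) < 1 then edist (Gamma γ x c) x else 0))
              = ((Finset.range n).filter (fun i => u i < 1 ∧ ¬ u (i+1) < 1)).card
                  • edist (Gamma γ x c) x := by
            rw [← Finset.sum_filter, Finset.sum_const]
          rw [heq]
          have hcard : ((Finset.range n).filter (fun i => u i < 1 ∧ ¬ u (i+1) < 1)).card ≤ 1 := by
            rw [Finset.card_le_one]
            have h' : ∀ a b : ℕ, a < b → (u a < 1 ∧ ¬ u (a+1) < 1) →
                (u b < 1 ∧ ¬ u (b+1) < 1) → False := by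
              intro a b hab ha hb
              exact ha.2 (lt_of_le_of_lt (hu (by omega : a + 1 ≤ b)) hb.1)
            intro a ha b hb
            simp only [Finset.mem_filter] at ha hb
            rcases lt_trichotomy a b with h | h | h
            · exact (h' a b h ha.2 hb.2).elim
            · exact h
            · exact (h' b a h hb.2 ha.2).elim
          calc ((Finset.range n).filter (fun i => u i < 1 ∧ ¬ u (i+1) < 1)).card
                • edist (Gamma γ x c) x
              = (((Finset.range n).filter (fun i => u i < 1 ∧ ¬ u (i+1) < 1)).card : ENNReal)
                  * edist (Gamma γ x c) x := nsmul_eq_mul _ _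
            _ ≤ 1 * edist (Gamma γ x c) x := by
                refine mul_le_mul_left ?_ _
                exact_mod_cast hcard
            _ = edist (Gamma γ x c) x := one_mul _
    _ ≤ (∑ k ∈ Finset.range K, eVariationOn (γ k) (Icc (0:ℝ) 1)) +
          ∑' j, eVariationOn (γ (j + K)) (Icc (0:ℝ) 1) := by
        refine add_le_add (Gamma_var_prefix γ x hend K) ?_
        rw [hc, Gamma_at_a]
        refine (edist_start_to_x γ x hend hv K).trans_eq ?_
        exact tsum_congr fun j => by rw [add_comm]
    _ = ∑' k, eVariationOn (γ k) (Icc (0:ℝ) 1) :=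
        ((HasSum.sum_range_add (ENNReal.summable.hasSum)).tsum_eq).symm

end

end ClosureIntrinsicAux
namespace ClosureIntrinsicAux

lemma sInf_pathLengths_le {X : Type*} [MetricSpace X] {s : Set X} (hs : IsClosed s) (x : X)
    (γ : ℕ → ℝ → X)
    (hcont : ∀ k, ContinuousOn (γ k) (Icc 0 1))
    (hend : ∀ k, γ k 1 = γ (k+1) 0)
    (himg : ∀ k, γ k '' Icc 0 1 ⊆ s)
    (hv : Filter.Tendsto (fun k => γ k 0) Filter.atTop (nhds x))
    (hl : Filter.Tendsto (fun k => eVariationOn (γ k) (Icc (0:ℝ) 1)) Filter.atTop (nhds 0)) :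
    sInf (pathLengths s (γ 0 0) x) ≤ ∑' k, eVariationOn (γ k) (Icc (0:ℝ) 1) := by
  have hx : x ∈ s := hs.mem_of_tendsto hv
    (Filter.Eventually.of_forall fun k => himg k ⟨0, ⟨le_rfl, zero_le_one⟩, rfl⟩)
  have hΓ0 : Gamma γ x 0 = γ 0 0 := by
    have := Gamma_at_a γ x 0
    rwa [aSeq_zero] at this
  refine (sInf_le ?_).trans (Gamma_var γ x hend hv)
  refine ⟨Gamma γ x, Gamma_contOn γ x hcont hend hv hl, hΓ0, Gamma_one γ x, ?_, rfl⟩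
  rintro _ ⟨t, ht, rfl⟩
  by_cases htl : t < 1
  · obtain ⟨hG, hpsi⟩ := Gamma_mem (γ := γ) (x := x) ht.1 htl
    rw [hG]
    exact himg _ ⟨_, hpsi, rfl⟩
  · have : t = 1 := le_antisymm ht.2 (not_lt.mp htl)
    subst this
    rw [Gamma_one]
    exact hx

end ClosureIntrinsicAux

/-- If `U` is an open relatively compact subset of a length space `X`, then the
closure `Ū` equipped with its induced intrinsic metric `d_Ū` (assumed finite) is
complete: every `d_Ū`-Cauchy sequence in `Ū` converges in `(Ū, d_Ū)`. -/
theorem closure_intrinsic_complete {X : Type*} [MetricSpace X]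
    (hlength : ∀ x y : X, ENNReal.ofReal (dist x y) = sInf (pathLengths univ x y))
    (U : Set X) (hUopen : IsOpen U) (hcomp : IsCompact (closure U))
    (dU : X → X → ENNReal)
    (hdU : ∀ x y, dU x y = sInf (pathLengths (closure U) x y))
    (hfin : ∀ x ∈ closure U, ∀ y ∈ closure U, dU x y < ⊤) :
    ∀ u : ℕ → X, (∀ n, u n ∈ closure U) →
      (∀ ε : ℝ, 0 < ε → ∃ N : ℕ, ∀ m ≥ N, ∀ n ≥ N, dU (u m) (u n) < ENNReal.ofReal ε) →
      ∃ x ∈ closure U, Filter.Tendsto (fun n => dU (u n) x) Filter.atTop (nhds 0) := by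
  intro u hu hcauchy
  have hdist : ∀ m n, ENNReal.ofReal (dist (u m) (u n)) ≤ dU (u m) (u n) := by
    intro m n
    rw [hdU]
    refine le_sInf ?_
    rintro L ⟨g, hgc, hg0, hg1, hgim, rfl⟩
    calc ENNReal.ofReal (dist (u m) (u n)) = edist (u m) (u n) := (edist_dist _ _).symm
      _ = edist (g 0) (g 1) := by rw [hg0, hg1]
      _ ≤ eVariationOn g (Icc 0 1) :=
          eVariationOn.edist_le g ⟨le_rfl, zero_le_one⟩ ⟨zero_le_one, le_rfl⟩
  have hcs : CauchySeq u := by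
    rw [Metric.cauchySeq_iff]
    intro ε hε
    obtain ⟨N, hN⟩ := hcauchy ε hε
    refine ⟨N, fun m hm n hn => ?_⟩
    have := lt_of_le_of_lt (hdist m n) (hN m hm n hn)
    rwa [ENNReal.ofReal_lt_ofReal_iff hε] at this
  obtain ⟨x, hxs, hx⟩ := cauchySeq_tendsto_of_isComplete hcomp.isComplete hu hcs
  refine ⟨x, hxs, ?_⟩
  rw [ENNReal.tendsto_atTop_zero]
  intro δ hδ
  obtain ⟨ε, hε, hεδ⟩ : ∃ ε : ℝ, 0 < ε ∧ ENNReal.ofReal ε ≤ δ := by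
    rcases eq_or_ne δ ⊤ with h | h
    · exact ⟨1, one_pos, by simp [h]⟩
    · exact ⟨δ.toReal, ENNReal.toReal_pos hδ.ne' h, by rw [ENNReal.ofReal_toReal h]⟩
  set es : ℕ → ℝ := fun k => ε / 4 * (1/2)^k with hes
  have hespos : ∀ k, 0 < es k := fun k => by positivity
  have hNf : ∀ k, ∃ N, ∀ m ≥ N, ∀ n ≥ N, dU (u m) (u n) < ENNReal.ofReal (es k) :=
    fun k => hcauchy (es k) (hespos k)
  choose Nf hNfs using hNf
  refine ⟨Nf 0, fun n hn => ?_⟩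
  set m : ℕ → ℕ := fun k =>
    Nat.rec (motive := fun _ => ℕ) n (fun j ih => max (ih + 1) (Nf (j+1))) k with hm
  have hm0 : m 0 = n := rfl
  have hmsucc : ∀ k, m (k+1) = max (m k + 1) (Nf (k+1)) := fun k => rfl
  have hmlt : ∀ k, m k < m (k+1) := fun k => by rw [hmsucc]; omega
  have hmNf : ∀ k, Nf k ≤ m k := by
    intro k
    cases k with
    | zero => exact hn
    | succ j => rw [hmsucc]; omega
  have hd : ∀ k, dU (u (m k)) (u (m (k+1))) < ENNReal.ofReal (es k) :=
    fun k => hNfs k _ (hmNf k) _ ((hmNf k).trans (hmlt k).le)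
  have hsm : StrictMono m := strictMono_nat_of_lt_succ hmlt
  have htend : Filter.Tendsto (fun k => u (m k)) Filter.atTop (nhds x) :=
    hx.comp hsm.tendsto_atTop
  have hpaths : ∀ k, ∃ g : ℝ → X, ContinuousOn g (Icc 0 1) ∧ g 0 = u (m k) ∧
      g 1 = u (m (k+1)) ∧ g '' Icc 0 1 ⊆ closure U ∧
      eVariationOn g (Icc 0 1) < ENNReal.ofReal (es k) := by
    intro k
    have h := hd k
    rw [hdU] at h
    obtain ⟨L, hL, hLlt⟩ := sInf_lt_iff.mp h
    obtain ⟨g, h1, h2, h3, h4, rfl⟩ := hL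
    exact ⟨g, h1, h2, h3, h4, hLlt⟩
  choose γ hγc hγ0 hγ1 hγim hγlen using hpaths
  have hend : ∀ k, γ k 1 = γ (k+1) 0 := fun k => by rw [hγ1, hγ0]
  have hv : Filter.Tendsto (fun k => γ k 0) Filter.atTop (nhds x) :=
    htend.congr fun k => (hγ0 k).symm
  have hlesum : Filter.Tendsto (fun k => ENNReal.ofReal (es k)) Filter.atTop (nhds 0) := by
    have h1 : Filter.Tendsto es Filter.atTop (nhds 0) := by
      have h2 := tendsto_pow_atTop_nhds_zero_of_lt_one (r := (1:ℝ)/2) (by norm_num) (by norm_num)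
      simpa [hes] using h2.const_mul (ε/4)
    simpa using ENNReal.tendsto_ofReal h1
  have hl : Filter.Tendsto (fun k => eVariationOn (γ k) (Icc (0:ℝ) 1)) Filter.atTop (nhds 0) :=
    tendsto_of_tendsto_of_tendsto_of_le_of_le tendsto_const_nhds hlesum
      (fun k => zero_le) (fun k => (hγlen k).le)
  have hmain := ClosureIntrinsicAux.sInf_pathLengths_le isClosed_closure x γ hγc hend hγim hv hl
  rw [hγ0 0, hm0] at hmain
  rw [hdU]
  refine hmain.trans ?_
  calc ∑' k, eVariationOn (γ k) (Icc (0:ℝ) 1)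
      ≤ ∑' k, ENNReal.ofReal (es k) := ENNReal.tsum_le_tsum fun k => (hγlen k).le
    _ = ENNReal.ofReal (∑' k, es k) := by
        rw [ENNReal.ofReal_tsum_of_nonneg (fun k => (hespos k).le)
          (Summable.mul_left _ summable_geometric_two)]
    _ ≤ δ := by
        have hsum : (∑' k, es k) = ε / 4 * 2 := by
          rw [hes, tsum_mul_left, tsum_geometric_two]
        rw [hsum]
        exact le_trans (ENNReal.ofReal_le_ofReal (by linarith)) hεδ
end

section
/- Consider M = ℝ² with the conformally flat metric g = (1 + |x|^λ)(dx² + dy²) for a parameter λ ∈ (1,2), where |x| denotes the absolute value of the first coordinate. On the open set {x ≠ 0}, the Gauss curvature of g equals sec = λ|x|^{λ−2}(1 + |x|^λ − λ) / (2(1 + |x|^λ)³), and this quantity tends to −∞ as x → 0 (with 1 < λ < 2). -/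
open Real Filter

private lemma deriv_f_pos_aux (l : ℝ) (hl₁ : 1 < l) (f : ℝ → ℝ)
    (hf : ∀ x : ℝ, f x = Real.log (1 + |x| ^ l) / 2) {x : ℝ} (hx : 0 < x) :
    deriv f x = l * x ^ (l - 1) / (2 * (1 + x ^ l)) := by
  have hev : f =ᶠ[nhds x] fun y => Real.log (1 + y ^ l) / 2 := by
    filter_upwards [lt_mem_nhds hx] with y hy
    rw [hf, abs_of_pos hy]
  rw [hev.deriv_eq]
  have hpos : (0:ℝ) < 1 + x ^ l := by positivity
  have h1 : HasDerivAt (fun y : ℝ => y ^ l) (l * x ^ (l - 1)) x :=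
    Real.hasDerivAt_rpow_const (Or.inl hx.ne')
  have h2 : HasDerivAt (fun y : ℝ => 1 + y ^ l) (l * x ^ (l - 1)) x := h1.const_add 1
  have h3 := (h2.log hpos.ne').div_const 2
  rw [h3.deriv]
  rw [div_div]
  ring_nf

private lemma deriv2_f_pos_aux (l : ℝ) (hl₁ : 1 < l) (f : ℝ → ℝ)
    (hf : ∀ x : ℝ, f x = Real.log (1 + |x| ^ l) / 2) {x : ℝ} (hx : 0 < x) :
    deriv (deriv f) x =
      (l * (l - 1) * x ^ (l - 2) * (2 * (1 + x ^ l))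
        - l * x ^ (l - 1) * (2 * (l * x ^ (l - 1)))) / (2 * (1 + x ^ l)) ^ 2 := by
  have hev : deriv f =ᶠ[nhds x] fun y => l * y ^ (l - 1) / (2 * (1 + y ^ l)) := by
    filter_upwards [lt_mem_nhds hx] with y hy
    exact deriv_f_pos_aux l hl₁ f hf hy
  rw [hev.deriv_eq]
  have hpos : (0:ℝ) < 1 + x ^ l := by positivity
  have hn : HasDerivAt (fun y : ℝ => l * y ^ (l - 1)) (l * ((l - 1) * x ^ (l - 1 - 1))) x :=
    (Real.hasDerivAt_rpow_const (Or.inl hx.ne')).const_mul l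
  have hd : HasDerivAt (fun y : ℝ => 2 * (1 + y ^ l)) (2 * (l * x ^ (l - 1))) x :=
    ((Real.hasDerivAt_rpow_const (Or.inl hx.ne')).const_add 1).const_mul 2
  have hden : 2 * (1 + x ^ l) ≠ 0 := by positivity
  have h := hn.div hd hden
  rw [show (fun y : ℝ => l * y ^ (l - 1) / (2 * (1 + y ^ l))) = ((fun y : ℝ => l * y ^ (l - 1)) / fun y => 2 * (1 + y ^ l)) from rfl, h.deriv]
  have hx12 : l - 1 - 1 = l - 2 := by ring
  rw [hx12]
  ring_nf

/-- For the conformally flat metric `g = (1+|x|^λ)(dx² + dy²)` on `ℝ²` with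
`λ ∈ (1,2)` (conformal factor `e^{2f} = 1 + |x|^λ`), on `{x ≠ 0}` the Gauss
curvature `K = −e^{−2f}Δf = −e^{−2f}f''` equals
`λ|x|^{λ−2}(1 + |x|^λ − λ)/(2(1 + |x|^λ)³)`, and this tends to `−∞` as `x → 0`. -/
theorem hartmanWintner_curvature_blowup_below (l : ℝ) (hl₁ : 1 < l) (hl₂ : l < 2)
    (f : ℝ → ℝ) (hf : ∀ x : ℝ, f x = Real.log (1 + |x| ^ l) / 2)
    (sec : ℝ → ℝ)
    (hsec : ∀ x : ℝ,
      sec x = l * |x| ^ (l - 2) * (1 + |x| ^ l - l) / (2 * (1 + |x| ^ l) ^ 3)) :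
    (∀ x : ℝ, x ≠ 0 → -(Real.exp (-(2 * f x))) * deriv (deriv f) x = sec x) ∧
    Tendsto sec (nhdsWithin 0 {(0:ℝ)}ᶜ) atBot := by
  constructor
  · -- pointwise curvature identity
    -- main claim for x > 0
    have main : ∀ x : ℝ, 0 < x →
        -(Real.exp (-(2 * f x))) * deriv (deriv f) x = sec x := by
      intro x hx
      have habs : |x| = x := abs_of_pos hx
      have hpos : (0:ℝ) < 1 + x ^ l := by positivity
      have hexp : Real.exp (-(2 * f x)) = (1 + x ^ l)⁻¹ := by
        rw [hf, habs]
        rw [show -(2 * (Real.log (1 + x ^ l) / 2)) = -Real.log (1 + x ^ l) by ring]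
        rw [Real.exp_neg, Real.exp_log hpos]
      rw [hexp, deriv2_f_pos_aux l hl₁ f hf hx, hsec, habs]
      -- algebra with rpow identities
      have ha1 : x ^ (l - 1) = x ^ (l - 2) * x := by
        have h := Real.rpow_add hx (l - 2) 1
        rw [Real.rpow_one, show l - 2 + 1 = l - 1 by ring] at h
        exact h
      have ha2 : x ^ l = x ^ (l - 1) * x := by
        have h := Real.rpow_add hx (l - 1) 1
        rw [Real.rpow_one, show l - 1 + 1 = l by ring] at h
        exact h
      set a := x ^ (l - 2) with haa
      rw [ha2, ha1]
      have h1 : (0:ℝ) < 1 + a * x * x := by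
        have := hpos; rw [ha2, ha1] at this; exact this
      field_simp
      ring
    intro x hx
    rcases hx.lt_or_gt with hneg | hposx
    · -- x < 0 : use evenness
      have feven : ∀ y : ℝ, f (-y) = f y := by
        intro y; rw [hf, hf, abs_neg]
      have hfn : (fun y => f (-y)) = f := funext feven
      have hd1 : ∀ y : ℝ, deriv f y = -deriv f (-y) := by
        intro y
        conv_lhs => rw [← hfn]
        exact deriv_comp_neg f y
      have hd2 : deriv (deriv f) x = deriv (deriv f) (-x) := by
        have : deriv f = fun y => -deriv f (-y) := funext hd1
        conv_lhs => rw [this]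
        rw [deriv.fun_neg (f := fun y => deriv f (-y)), deriv_comp_neg (deriv f) x, neg_neg]
      have hsx : sec x = sec (-x) := by rw [hsec, hsec, abs_neg]
      have hfx : f x = f (-x) := (feven x).symm
      rw [hd2, hfx, hsx]
      exact main (-x) (by linarith)
    · exact main x hposx
  · -- blow-up at 0
    have hA : Tendsto (fun x : ℝ => l * |x| ^ (l - 2)) (nhdsWithin 0 {(0:ℝ)}ᶜ) atTop := by
      have hinv : ∀ x : ℝ, |x| ^ (l - 2) = (|x| ^ (2 - l))⁻¹ := by
        intro x
        rw [show l - 2 = -(2 - l) by ring, Real.rpow_neg (abs_nonneg x)]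
      have h0 : Tendsto (fun x : ℝ => |x| ^ (2 - l)) (nhdsWithin 0 {(0:ℝ)}ᶜ)
          (nhdsWithin 0 (Set.Ioi 0)) := by
        apply tendsto_nhdsWithin_of_tendsto_nhds_of_eventually_within
        · have hc : ContinuousAt (fun x : ℝ => |x| ^ (2 - l)) 0 := by
            exact (Real.continuousAt_rpow_const _ _ (Or.inr (by linarith))).comp
              continuous_abs.continuousAt
          have := hc.tendsto
          simpa [Real.zero_rpow (by linarith : (2:ℝ) - l ≠ 0)] using this.mono_left
            nhdsWithin_le_nhds
        · filter_upwards [self_mem_nhdsWithin] with y hy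
          exact Real.rpow_pos_of_pos (abs_pos.mpr hy) _
      have := tendsto_inv_nhdsGT_zero.comp h0
      have h2 : Tendsto (fun x : ℝ => |x| ^ (l - 2)) (nhdsWithin 0 {(0:ℝ)}ᶜ) atTop := by
        refine this.congr fun x => ?_
        simp [Function.comp, hinv x]
      exact h2.const_mul_atTop (by linarith : (0:ℝ) < l)
    have habs0 : Tendsto (fun x : ℝ => |x| ^ l) (nhdsWithin 0 {(0:ℝ)}ᶜ) (nhds 0) := by
      have hc : ContinuousAt (fun x : ℝ => |x| ^ l) 0 :=
        (Real.continuousAt_rpow_const _ _ (Or.inr (by linarith))).comp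
          continuous_abs.continuousAt
      have := hc.tendsto
      simpa [Real.zero_rpow (by linarith : l ≠ 0)] using this.mono_left nhdsWithin_le_nhds
    have hB : Tendsto (fun x : ℝ => (1 + |x| ^ l - l) / (2 * (1 + |x| ^ l) ^ 3))
        (nhdsWithin 0 {(0:ℝ)}ᶜ) (nhds ((1 - l) / 2)) := by
      have hnum : Tendsto (fun x : ℝ => 1 + |x| ^ l - l) (nhdsWithin 0 {(0:ℝ)}ᶜ)
          (nhds (1 - l)) := by
        have := (habs0.const_add 1).sub_const l
        simpa using this
      have hden : Tendsto (fun x : ℝ => 2 * (1 + |x| ^ l) ^ 3) (nhdsWithin 0 {(0:ℝ)}ᶜ)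
          (nhds 2) := by
        have := ((habs0.const_add 1).pow 3).const_mul 2
        simpa using this
      have := hnum.div hden (by norm_num)
      exact this
    have hC : (1 - l) / 2 < 0 := by
      apply div_neg_of_neg_of_pos <;> linarith
    have := hA.atTop_mul_neg hC hB
    refine this.congr fun x => ?_
    rw [hsec, mul_div_assoc]
end

section
/- Consider M = (−1,1) × ℝ with the metric g = dx² + (1 − |x|^λ) dy², λ ∈ (1,2). On {x ≠ 0}, the Gauss curvature equals sec = λ|x|^{λ−2}(2λ + |x|^λ(2−λ) − 2) / (4(|x|^λ − 1)²), and it tends to +∞ as x → 0. -/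
open Real Filter

lemma hw_aux_pos (l : ℝ) (hl₁ : 1 < l)
    (φ : ℝ → ℝ) (hφ : ∀ x : ℝ, φ x = Real.sqrt (1 - |x| ^ l))
    (x : ℝ) (hx : 0 < x) (hx1 : x < 1) :
    -(deriv (deriv φ) x) / φ x =
      l * x ^ (l - 2) * (2 * l + x ^ l * (2 - l) - 2) / (4 * (x ^ l - 1) ^ 2) := by
  have hl0 : (0:ℝ) < l := by linarith
  -- basic facts for points t ∈ (0,1)
  have hne : ∀ t : ℝ, 0 < t → t < 1 → (1 : ℝ) - t ^ l ≠ 0 := by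
    intro t ht ht1
    have := Real.rpow_lt_one ht.le ht1 hl0
    exact sub_ne_zero.mpr (ne_of_gt this)
  -- derivative of φ on (0,1)
  have hder : ∀ t : ℝ, 0 < t → t < 1 →
      HasDerivAt φ ((0 - l * t ^ (l - 1)) / (2 * Real.sqrt (1 - t ^ l))) t := by
    intro t ht ht1
    have h1 : HasDerivAt (fun s : ℝ => s ^ l) (l * t ^ (l - 1)) t :=
      Real.hasDerivAt_rpow_const (Or.inl ht.ne')
    have h2 : HasDerivAt (fun s : ℝ => 1 - s ^ l) (0 - l * t ^ (l - 1)) t :=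
      (hasDerivAt_const t 1).sub h1
    have h3 := h2.sqrt (hne t ht ht1)
    refine h3.congr_of_eventuallyEq ?_
    filter_upwards [eventually_gt_nhds ht] with s hs
    rw [hφ, abs_of_pos hs]
  have hderiv_eq : ∀ t : ℝ, 0 < t → t < 1 →
      deriv φ t = (0 - l * t ^ (l - 1)) / (2 * Real.sqrt (1 - t ^ l)) := fun t ht ht1 =>
    (hder t ht ht1).deriv
  -- second derivative at x
  have hmem : ∀ᶠ t in nhds x, t ∈ Set.Ioo (0:ℝ) 1 :=
    (isOpen_Ioo).eventually_mem ⟨hx, hx1⟩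
  have hEq : deriv φ =ᶠ[nhds x]
      fun t => (0 - l * t ^ (l - 1)) / (2 * Real.sqrt (1 - t ^ l)) := by
    filter_upwards [hmem] with t ht
    exact hderiv_eq t ht.1 ht.2
  have hN : HasDerivAt (fun t : ℝ => 0 - l * t ^ (l - 1))
      (0 - l * ((l - 1) * x ^ (l - 2))) x := by
    have h1 : HasDerivAt (fun s : ℝ => s ^ (l - 1)) ((l - 1) * x ^ (l - 1 - 1)) x :=
      Real.hasDerivAt_rpow_const (Or.inl hx.ne')
    have : l - 1 - 1 = l - 2 := by ring
    rw [this] at h1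
    exact (hasDerivAt_const x 0).sub (h1.const_mul l)
  have hD : HasDerivAt (fun t : ℝ => 2 * Real.sqrt (1 - t ^ l))
      (2 * ((0 - l * x ^ (l - 1)) / (2 * Real.sqrt (1 - x ^ l)))) x := by
    have h1 : HasDerivAt (fun s : ℝ => s ^ l) (l * x ^ (l - 1)) x :=
      Real.hasDerivAt_rpow_const (Or.inl hx.ne')
    have h2 : HasDerivAt (fun s : ℝ => 1 - s ^ l) (0 - l * x ^ (l - 1)) x :=
      (hasDerivAt_const x 1).sub h1
    exact (h2.sqrt (hne x hx hx1)).const_mul 2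
  have hs0 : (0:ℝ) < Real.sqrt (1 - x ^ l) := by
    have := Real.rpow_lt_one hx.le hx1 hl0
    exact Real.sqrt_pos.mpr (by linarith)
  have hDne : 2 * Real.sqrt (1 - x ^ l) ≠ 0 := by positivity
  have hQ := hN.div hD hDne
  have h2nd : deriv (deriv φ) x =
      ((0 - l * ((l - 1) * x ^ (l - 2))) * (2 * Real.sqrt (1 - x ^ l)) -
        (0 - l * x ^ (l - 1)) * (2 * ((0 - l * x ^ (l - 1)) / (2 * Real.sqrt (1 - x ^ l))))) /
      (2 * Real.sqrt (1 - x ^ l)) ^ 2 := by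
    rw [hEq.deriv_eq]
    exact hQ.deriv
  -- algebra
  set s := Real.sqrt (1 - x ^ l) with hsdef
  set a := x ^ (l - 2) with hadef
  have hxl : x ^ l = a * x ^ 2 := by
    rw [hadef, ← Real.rpow_natCast x 2, ← Real.rpow_add hx]
    norm_num
  have hxl1 : x ^ (l - 1) = a * x := by
    have h : x ^ (l - 1) = x ^ (l - 2) * x ^ (1:ℝ) := by
      rw [← Real.rpow_add hx]; congr 1; ring
    rw [hadef, h, Real.rpow_one]
  have hssq : s ^ 2 = 1 - a * x ^ 2 := by
    rw [hsdef, Real.sq_sqrt, hxl]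
    have := Real.rpow_lt_one hx.le hx1 hl0
    linarith
  have hφx : φ x = s := by rw [hφ, abs_of_pos hx]
  rw [h2nd, hφx, hxl, hxl1]
  have hsne : s ≠ 0 := ne_of_gt hs0
  rw [show (a * x ^ 2 - 1) = -(s^2) by rw [hssq]; ring]
  field_simp
  linear_combination (8*l*a*(l-1)) * hssq

/-- For the warped-product metric `g = dx² + (1−|x|^λ)dy²` on `(−1,1) × ℝ` with
`λ ∈ (1,2)` (warping function `φ(x) = √(1−|x|^λ)`), on `{x ≠ 0}` the Gauss
curvature `K = −φ''/φ` equals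
`λ|x|^{λ−2}(2λ + |x|^λ(2−λ) − 2)/(4(|x|^λ − 1)²)`, and this tends to `+∞` as `x → 0`. -/
theorem hartmanWintner_curvature_blowup_above (l : ℝ) (hl₁ : 1 < l) (hl₂ : l < 2)
    (φ : ℝ → ℝ) (hφ : ∀ x : ℝ, φ x = Real.sqrt (1 - |x| ^ l))
    (sec : ℝ → ℝ)
    (hsec : ∀ x : ℝ,
      sec x = l * |x| ^ (l - 2) * (2 * l + |x| ^ l * (2 - l) - 2) /
        (4 * (|x| ^ l - 1) ^ 2)) :
    (∀ x : ℝ, x ≠ 0 → |x| < 1 → -(deriv (deriv φ) x) / φ x = sec x) ∧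
    Tendsto sec (nhdsWithin 0 {(0:ℝ)}ᶜ) atTop := by
  constructor
  · intro x hx0 hx1
    rcases lt_or_gt_of_ne hx0 with hneg | hpos
    · -- x < 0 : use evenness
      have habs : |x| = -x := abs_of_neg hneg
      have hφeven : ∀ t, φ (-t) = φ t := by
        intro t; rw [hφ, hφ, abs_neg]
      have hφodd : ∀ t, deriv φ (-t) = -deriv φ t := by
        intro t
        have : deriv φ t = deriv (fun s => φ (-s)) t := by
          congr 1; funext s; rw [hφeven]
        rw [this, deriv_comp_neg]
        ring_nf
      have hd2 : deriv (deriv φ) (-x) = deriv (deriv φ) x := by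
        have h1 : deriv (deriv φ) x = deriv (fun s => -(deriv φ (-s))) x := by
          congr 1; funext s
          rw [hφodd]; ring
        rw [h1, deriv.fun_neg, deriv_comp_neg]
        ring
      have := hw_aux_pos l hl₁ φ hφ (-x) (by linarith) (by rw [← habs]; exact hx1)
      rw [hd2, hφeven] at this
      rw [this, hsec, habs]
    · -- x > 0
      have habs : |x| = x := abs_of_pos hpos
      have := hw_aux_pos l hl₁ φ hφ x hpos (by rw [← habs]; exact hx1)
      rw [this, hsec, habs]
  · -- blow up
    have hfun : sec = (fun y : ℝ =>
        y ^ (l - 2) * (l * (2 * l + y ^ l * (2 - l) - 2) / (4 * (y ^ l - 1) ^ 2))) ∘ abs := by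
      funext x
      simp only [Function.comp_apply, hsec]
      ring
    rw [hfun]
    refine Tendsto.comp ?_ tendsto_abs_nhdsNE_zero
    have h1 : Tendsto (fun y : ℝ => y ^ (l - 2)) (nhdsWithin 0 (Set.Ioi 0)) atTop := by
      have h2 : Tendsto (fun y : ℝ => y⁻¹) (nhdsWithin 0 (Set.Ioi 0)) atTop :=
        tendsto_inv_nhdsGT_zero
      have h3 := (tendsto_rpow_atTop (y := 2 - l) (by linarith)).comp h2
      refine h3.congr' ?_
      filter_upwards [self_mem_nhdsWithin] with y hy
      simp only [Function.comp_apply]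
      rw [← Real.rpow_neg_one y, ← Real.rpow_mul (le_of_lt hy),
        show (-1:ℝ) * (2 - l) = l - 2 by ring]
    have h2 : Tendsto (fun y : ℝ => l * (2 * l + y ^ l * (2 - l) - 2) / (4 * (y ^ l - 1) ^ 2))
        (nhdsWithin 0 (Set.Ioi 0)) (nhds (l * (2 * l + 0 * (2 - l) - 2) / (4 * (0 - 1) ^ 2))) := by
      have hyl : Tendsto (fun y : ℝ => y ^ l) (nhdsWithin 0 (Set.Ioi 0)) (nhds 0) := by
        have hc : ContinuousAt (fun y : ℝ => y ^ l) 0 :=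
          Real.continuousAt_rpow_const 0 l (Or.inr (by linarith))
        have := hc.tendsto
        rw [Real.zero_rpow (by positivity : l ≠ 0)] at this
        exact this.mono_left nhdsWithin_le_nhds
      apply Tendsto.div
      · exact tendsto_const_nhds.mul (((tendsto_const_nhds.add (hyl.mul tendsto_const_nhds)).sub tendsto_const_nhds))
      · exact tendsto_const_nhds.mul (((hyl.sub tendsto_const_nhds).pow 2))
      · norm_num
    have hC : 0 < l * (2 * l + 0 * (2 - l) - 2) / (4 * ((0:ℝ) - 1) ^ 2) := by
      rw [show (0:ℝ) * (2 - l) = 0 by ring]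
      have : (0:ℝ) < l * (2 * l + 0 - 2) := by nlinarith
      positivity
    exact h1.atTop_mul_pos hC h2
end
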